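/- arXiv:1106.4684 — 5 statements merged into one kernel-verified Lean document; each statement's English description precedes it below -/
import Mathlib

section
/- For I = 1 and any positive integer s, the partition sum Σ_{π ⊂ J} D_π H_π(s) equals J! · S_2(s, J), where S_2 denotes Stirling numbers of the second kind. In particular it vanishes whenever s < J. -/
open Finset

/-- `D_π` for a partition `π` of `J`. -/
noncomputable def Dpi (J : ℕ) (p : Nat.Partition J) : ℚ :=
  (-1) ^ (Multiset.card p.parts - 1) * (J.factorial : ℚ) /
      (((p.parts.map Nat.factorial).prod : ℕ) * (Multiset.card p.parts : ℚ)) *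
    (((Multiset.card p.parts).factorial : ℚ) /
      ∏ i ∈ Finset.range (J + 1), ((p.parts.count i).factorial : ℚ))

/-- `H_π(s) = Σ_{i=1}^J i^s m_i`. -/
def Hpi (J : ℕ) (p : Nat.Partition J) (s : ℕ) : ℚ :=
  ((p.parts.map fun i => i ^ s).sum : ℕ)

/-- Stirling numbers of the second kind. -/
def stirling2 : ℕ → ℕ → ℕ
  | 0, 0 => 1
  | 0, _ + 1 => 0
  | _ + 1, 0 => 0
  | n + 1, k + 1 => (k + 1) * stirling2 n (k + 1) + stirling2 n k

/-!
Write `w(π) = (-1)^k · (number of orderings of π) / ∏_{i ∈ π} i!` (`Multiset.altWeight`) for a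
partition `π` with `k` parts.
Then `D_π = -J! · w(π) / k`, and `w(π)` is the coefficient of the monomial of type `π` in
`1 / (1 + Σ_{i ≥ 1} x^i / i!) = e^{-x}`, so that `Σ_{π ⊢ n} w(π) = (-1)^n / n!`.

Removing one part `a` from `π` gives `m_a(π) · w(π) / k = -w(π ∖ a) / a!`. Hence summing
`Σ_a m_a g(a)` against `w(π) / k` over the partitions of `n` yields
`-Σ_a g(a) / a! · Σ_{π' ⊢ n - a} w(π')`. With `g = 1` this is the recursion
`U(n) = -Σ_{a=1}^n U(n-a) / a!` that determines `U(n) = Σ_{π ⊢ n} w(π)`; with `g(a) = a^s` it turns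
`Σ_π D_π H_π(s)` into `Σ_a (-1)^{J-a} C(J,a) a^s`, the classical formula for `J! S_2(s,J)`.
-/

namespace Multiset

variable {α : Type*} [DecidableEq α]

theorem countPerms_mul_prod_factorial_count {t : Multiset α} {s : Finset α}
    (h : t.toFinset ⊆ s) : t.countPerms * ∏ i ∈ s, (t.count i).factorial = (card t).factorial := by
  rw [countPerms, Finsupp.multinomial_eq_of_support_subset (s := s) (by rwa [toFinsupp_support]),
    mul_comm]
  convert Nat.multinomial_spec s (toFinsupp t) using 2
  · rfl
  · exact (sum_count_eq_card fun a ha => h (mem_toFinset.2 ha)).symm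

theorem count_mul_countPerms_cons (a : α) (t : Multiset α) :
    (a ::ₘ t).count a * (a ::ₘ t).countPerms = (card t + 1) * t.countPerms := by
  rw [countPerms_filter_ne a, countPerms_filter_ne a t, filter_cons_of_neg _ (by simp),
    count_cons_self, card_cons, ← mul_assoc, ← mul_assoc, Nat.add_one_mul_choose_eq]
  ring

end Multiset

theorem Finset.sum_range_succ_eq_add_sum_Icc {M : Type*} [AddCommMonoid M] (f : ℕ → M) (n : ℕ) :
    ∑ a ∈ range (n + 1), f a = f 0 + ∑ a ∈ Icc 1 n, f a := by
  rw [Nat.range_succ_eq_Icc_zero, ← insert_Icc_add_one_left_eq_Icc (Nat.zero_le n),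
    sum_insert (by simp), zero_add]

theorem sum_range_neg_one_pow_div_factorial_mul_factorial {K : Type*} [Field K] [CharZero K]
    {m : ℕ} (hm : m ≠ 0) :
    ∑ a ∈ range (m + 1), (-1 : K) ^ (m - a) / (a.factorial * (m - a).factorial) = 0 := by
  have h := add_pow (1 : K) (-1) m
  simp only [add_neg_cancel, one_pow, one_mul, zero_pow hm] at h
  rw [← mul_right_inj' (Nat.cast_ne_zero.2 m.factorial_ne_zero), mul_zero, h, mul_sum]
  refine sum_congr rfl fun a ha => ?_
  have := Nat.cast_ne_zero (R := K) |>.2 a.factorial_ne_zero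
  have := Nat.cast_ne_zero (R := K) |>.2 (m - a).factorial_ne_zero
  rw [Nat.cast_choose K (mem_range_succ_iff.1 ha)]
  field_simp

theorem Nat.cast_mul_choose_succ {R : Type*} [CommRing R] (k a : ℕ) :
    (a : R) * (k + 1).choose a = (k + 1) * ((k + 1).choose a - k.choose a) := by
  cases a with
  | zero => simp
  | succ b =>
    have h1 := congrArg (Nat.cast : ℕ → R) (Nat.add_one_mul_choose_eq k b)
    have h2 := congrArg (Nat.cast : ℕ → R) (Nat.choose_succ_succ' k b)
    push_cast at h1 h2 ⊢
    linear_combination -h1 - ((k : R) + 1) * h2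

theorem Nat.factorial_mul_stirlingSecond_eq_sum {R : Type*} [CommRing R] (n k : ℕ) :
    ((k.factorial * n.stirlingSecond k : ℕ) : R) =
      ∑ a ∈ range (k + 1), (-1) ^ (k - a) * k.choose a * (a : R) ^ n := by
  induction n generalizing k with
  | zero =>
    have h := add_pow (1 : R) (-1) k
    simp only [add_neg_cancel, one_pow, one_mul] at h
    simp only [pow_zero, mul_one, ← h]
    cases k <;> simp
  | succ n ih =>
    cases k with
    | zero => simp
    | succ k =>
      have hsplit : ∀ a ∈ range (k + 2),
          (-1) ^ (k + 1 - a) * ((k + 1).choose a : R) * (a : R) ^ (n + 1) =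
            (k + 1) * ((-1) ^ (k + 1 - a) * ((k + 1).choose a : R) * (a : R) ^ n) +
              (k + 1) * ((-1) ^ (k - a) * (k.choose a : R) * (a : R) ^ n) := by
        intro a ha
        rcases Nat.lt_succ_iff_lt_or_eq.1 (mem_range.1 ha) with ha | rfl
        · rw [show k + 1 - a = k - a + 1 by omega, pow_succ, pow_succ]
          linear_combination -(-1) ^ (k - a) * (a : R) ^ n * Nat.cast_mul_choose_succ (R := R) k a
        · simp [pow_succ, mul_comm]
      rw [sum_congr rfl hsplit, sum_add_distrib, ← mul_sum, ← mul_sum,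
        sum_range_succ (fun a => (-1) ^ (k - a) * (k.choose a : R) * (a : R) ^ n) (k + 1),
        Nat.choose_succ_self, ← ih, ← ih, Nat.stirlingSecond_succ_succ, Nat.factorial_succ]
      push_cast
      ring

theorem stirling2_eq_stirlingSecond : stirling2 = Nat.stirlingSecond := by
  funext n k
  induction n generalizing k with
  | zero => cases k <;> rfl
  | succ n ih => cases k <;> simp [stirling2, Nat.stirlingSecond_succ_succ, ih]

theorem Nat.Partition.sum_sum_toFinset_parts {β : Type*} [AddCommMonoid β] (n : ℕ)
    (F : Multiset ℕ → ℕ → β) :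
    ∑ p : n.Partition, ∑ a ∈ p.parts.toFinset, F p.parts a =
      ∑ a ∈ Icc 1 n, ∑ q : (n - a).Partition, F (a ::ₘ q.parts) a := by
  rw [sum_comm' (t' := Icc 1 n) (s' := fun a => univ.filter (a ∈ ·.parts))]
  · refine sum_congr rfl fun a ha => ?_
    obtain ⟨ha1, ha⟩ := mem_Icc.1 ha
    rw [sum_subtype _ (p := fun p : n.Partition => a ∈ p.parts) (by simp),
      ← (partitionWithPartEquiv ha1 ha).symm.sum_comp]
    simp
  · intro p a
    simp only [mem_univ, Multiset.mem_toFinset, true_and, mem_filter, mem_Icc, iff_self_and]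
    exact fun h => ⟨p.parts_pos h, p.le_of_mem_parts h⟩

noncomputable def Multiset.altWeight (t : Multiset ℕ) : ℚ :=
  (-1) ^ card t * t.countPerms / (t.map Nat.factorial).prod

open Multiset in
theorem Multiset.count_mul_altWeight_cons_div_card (a : ℕ) (t : Multiset ℕ) :
    (count a (a ::ₘ t) : ℚ) * altWeight (a ::ₘ t) / card (a ::ₘ t) = -altWeight t / a.factorial := by
  have h := congrArg (Nat.cast : ℕ → ℚ) (count_mul_countPerms_cons a t)
  push_cast at h
  have : ((t.map Nat.factorial).prod : ℚ) ≠ 0 :=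
    Nat.cast_ne_zero.2 (prod_ne_zero (by simp [Nat.factorial_ne_zero]))
  simp only [altWeight, card_cons, map_cons, prod_cons, pow_succ, Nat.cast_mul, Nat.cast_add,
    Nat.cast_one]
  field_simp
  linear_combination -h

namespace Nat.Partition

theorem sum_sum_map_parts_mul_altWeight_div_card (n : ℕ) (g : ℕ → ℚ) :
    ∑ p : n.Partition, (p.parts.map g).sum * p.parts.altWeight / Multiset.card p.parts =
      -∑ a ∈ Icc 1 n, g a / a.factorial * ∑ q : (n - a).Partition, q.parts.altWeight := by
  have h (p : n.Partition) :
      (p.parts.map g).sum * p.parts.altWeight / Multiset.card p.parts =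
        ∑ a ∈ p.parts.toFinset, g a *
          (p.parts.count a * p.parts.altWeight / Multiset.card p.parts) := by
    rw [sum_multiset_map_count, sum_mul, sum_div]
    refine sum_congr rfl fun a _ => ?_
    rw [nsmul_eq_mul]
    ring
  rw [sum_congr rfl fun p _ => h p, sum_sum_toFinset_parts n fun t a =>
    g a * (t.count a * t.altWeight / Multiset.card t)]
  simp only [Multiset.count_mul_altWeight_cons_div_card, mul_sum, ← sum_neg_distrib]
  refine sum_congr rfl fun a _ => sum_congr rfl fun q _ => ?_
  ring

theorem sum_altWeight (n : ℕ) :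
    ∑ p : n.Partition, p.parts.altWeight = (-1) ^ n / n.factorial := by
  induction n using Nat.strong_induction_on with
  | _ n ih =>
  rcases n with _ | n
  · simp [Multiset.altWeight]
  have hcard (p : (n + 1).Partition) : p.parts.altWeight =
      (p.parts.map fun _ => (1 : ℚ)).sum * p.parts.altWeight / Multiset.card p.parts := by
    have : (Multiset.card p.parts : ℚ) ≠ 0 := Nat.cast_ne_zero.2 fun h => by
      simpa [Multiset.card_eq_zero.1 h] using p.parts_sum
    rw [Multiset.map_const', Multiset.sum_replicate, nsmul_eq_mul, mul_one,
      mul_div_cancel_left₀ _ this]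
  have hbinom := sum_range_neg_one_pow_div_factorial_mul_factorial (K := ℚ) n.add_one_ne_zero
  rw [sum_range_succ_eq_add_sum_Icc] at hbinom
  simp only [Nat.factorial_zero, Nat.cast_one, one_mul, Nat.sub_zero] at hbinom
  rw [sum_congr rfl fun p _ => hcard p, sum_sum_map_parts_mul_altWeight_div_card]
  rw [sum_congr rfl fun a ha => by rw [ih (n + 1 - a) (by grind)]]
  rw [← neg_eq_iff_eq_neg.2 (eq_neg_of_add_eq_zero_right hbinom)]
  exact congrArg _ (sum_congr rfl fun a _ => by ring)

end Nat.Partition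

theorem Dpi_eq_neg_factorial_mul_altWeight_div_card (J : ℕ) (p : J.Partition) :
    Dpi J p = -J.factorial * p.parts.altWeight / Multiset.card p.parts := by
  have h := congrArg (Nat.cast : ℕ → ℚ) (Multiset.countPerms_mul_prod_factorial_count
    (s := range (J + 1)) (t := p.parts) fun i hi =>
      mem_range_succ_iff.2 (p.le_of_mem_parts (Multiset.mem_toFinset.1 hi)))
  push_cast at h
  by_cases hk : Multiset.card p.parts = 0
  · simp [Dpi, hk]
  obtain ⟨k, hk⟩ := Nat.exists_eq_add_one_of_ne_zero hk
  have : (∏ i ∈ range (J + 1), ((p.parts.count i).factorial : ℚ)) ≠ 0 := by positivity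
  rw [Dpi, ← h, Multiset.altWeight, hk, pow_succ, Nat.add_sub_cancel]
  field_simp

theorem sum_Dpi_mul_Hpi_eq_sum_choose (J : ℕ) {s : ℕ} (hs : s ≠ 0) :
    ∑ p : J.Partition, Dpi J p * Hpi J p s =
      ∑ a ∈ range (J + 1), (-1) ^ (J - a) * J.choose a * (a : ℚ) ^ s := by
  have h (p : J.Partition) : Dpi J p * Hpi J p s = -J.factorial *
      ((p.parts.map fun a : ℕ => (a : ℚ) ^ s).sum * p.parts.altWeight / Multiset.card p.parts) := by
    rw [Dpi_eq_neg_factorial_mul_altWeight_div_card, Hpi, Nat.cast_multiset_sum, Multiset.map_map]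
    simp only [Function.comp_def, Nat.cast_pow]
    ring
  rw [sum_congr rfl fun p _ => h p, ← mul_sum,
    Nat.Partition.sum_sum_map_parts_mul_altWeight_div_card, sum_range_succ_eq_add_sum_Icc,
    Nat.cast_zero, zero_pow hs, mul_zero, zero_add, neg_mul_neg, mul_sum]
  refine sum_congr rfl fun a ha => ?_
  rw [Nat.Partition.sum_altWeight, Nat.cast_choose ℚ (mem_Icc.1 ha).2]
  field_simp

theorem sum_Dpi_Hpi_eq_stirling_general (J s : ℕ) (hs : 1 ≤ s) :
    (∑ p : Nat.Partition J, Dpi J p * Hpi J p s = (J.factorial : ℚ) * stirling2 s J) ∧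
      (s < J → ∑ p : Nat.Partition J, Dpi J p * Hpi J p s = 0) := by
  have h : ∑ p : Nat.Partition J, Dpi J p * Hpi J p s = (J.factorial : ℚ) * stirling2 s J := by
    rw [sum_Dpi_mul_Hpi_eq_sum_choose J (Nat.one_le_iff_ne_zero.1 hs), stirling2_eq_stirlingSecond,
      ← Nat.cast_mul, Nat.factorial_mul_stirlingSecond_eq_sum]
  refine ⟨h, fun hlt => ?_⟩
  rw [h, stirling2_eq_stirlingSecond, Nat.stirlingSecond_eq_zero_of_lt hlt, Nat.cast_zero, mul_zero]

theorem sum_Dpi_Hpi_eq_stirling (J s : ℕ) (hJ : 1 ≤ J) (hs : 1 ≤ s) :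
    (∑ p : Nat.Partition J, Dpi J p * Hpi J p s = (J.factorial : ℚ) * stirling2 s J) ∧
      (s < J → ∑ p : Nat.Partition J, Dpi J p * Hpi J p s = 0) :=
  sum_Dpi_Hpi_eq_stirling_general J s hs
end

section
/- For the random equiprobable distribution of n indistinguishable balls into N distinguishable boxes, the number S_n^(r) of boxes containing exactly r balls has i-th factorial moment E[(S_n^(r))_i] = (N)_i (N−1)_i (n)_{ir} / (n+N−1)_{i(r+1)} for all i with i(r+1) ≤ n+N−1. -/
/-!
A configuration is a function `f : Fin N → ℕ` with `∑ f = n`. Writing `(S)_i = i! · C(S, i)`,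
the sum of `(S_n^(r))_i` over configurations counts pairs (configuration, `i`-set of boxes holding
exactly `r` balls each), times `i!`. Summing over the `i`-set first, the configurations holding `r`
balls in each box of a fixed `i`-set are, after emptying those boxes, the configurations of
`n - i r` balls in the other `N - i` boxes; there are `C(n - i r + N - i - 1, n - i r)` of them by
stars and bars. Dividing by the total number `C(n + N - 1, n)` of configurations and clearing
factorials gives the formula.
-/

open Finset

namespace Finset

theorem sum_choose_card_filter {ι α : Type*} (A : Finset α) (s : Finset ι)
    (p : α → ι → Prop) [∀ a j, Decidable (p a j)] (k : ℕ) :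
    ∑ a ∈ A, (#{j ∈ s | p a j}).choose k =
      ∑ t ∈ powersetCard k s, #{a ∈ A | ∀ j ∈ t, p a j} := by
  have hchoose (a : α) : (#{j ∈ s | p a j}).choose k =
      #((powersetCard k s).bipartiteAbove (fun a t => ∀ j ∈ t, p a j) a) := by
    rw [← card_powersetCard, bipartiteAbove]
    congr 1
    ext t
    simp only [mem_powersetCard, mem_filter, subset_iff]
    grind
  simp_rw [hchoose]
  exact sum_card_bipartiteAbove_eq_sum_card_bipartiteBelow _

variable {ι : Type*} [DecidableEq ι]

theorem card_piAntidiag_nat (s : Finset ι) (n : ℕ) :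
    #(piAntidiag s n) = (#s + n - 1).choose n := by
  rw [← card_finsuppAntidiag_nat_eq_choose, finsuppAntidiag, card_map, card_attach]

theorem card_filter_mul_le_of_mem_piAntidiag {s : Finset ι} {n : ℕ} {f : ι → ℕ}
    (hf : f ∈ piAntidiag s n) (r : ℕ) : #{j ∈ s | f j = r} * r ≤ n := by
  rw [← (mem_piAntidiag.1 hf).1, ← smul_eq_mul, ← sum_const]
  calc ∑ _ ∈ {j ∈ s | f j = r}, r = ∑ j ∈ {j ∈ s | f j = r}, f j :=
        sum_congr rfl fun j hj => (mem_filter.1 hj).2.symm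
    _ ≤ ∑ j ∈ s, f j := sum_le_sum_of_subset (filter_subset _ _)

theorem card_filter_piAntidiag_eqOn {s t : Finset ι} (hts : t ⊆ s) {n r : ℕ}
    (hn : #t * r ≤ n) :
    #{f ∈ piAntidiag s n | ∀ j ∈ t, f j = r} = #(piAntidiag (s \ t) (n - #t * r)) := by
  have hsplit (f g : ι → ℕ) :
      ∑ j ∈ s, t.piecewise f g j = ∑ j ∈ t, f j + ∑ j ∈ s \ t, g j := by
    rw [sum_piecewise, inter_eq_right.2 hts]
  refine card_nbij' (fun f => t.piecewise 0 f) (fun g => t.piecewise (fun _ => r) g) ?_ ?_ ?_ ?_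
  · intro f hf
    simp only [coe_filter, Set.mem_ofPred_eq, mem_coe, mem_piAntidiag] at hf ⊢
    obtain ⟨⟨hsum, hsupp⟩, hr⟩ := hf
    rw [← piecewise_same (s := t) (f := f), hsplit, sum_congr rfl hr, sum_const,
      smul_eq_mul] at hsum
    refine ⟨?_, fun j hj => ?_⟩
    · rw [← hsum, Nat.add_sub_cancel_left]
      exact sum_congr rfl fun j hj => piecewise_eq_of_notMem _ _ _ (mem_sdiff.1 hj).2
    · by_cases hjt : j ∈ t <;> simp_all
  · intro g hg
    simp only [coe_filter, Set.mem_ofPred_eq, mem_coe, mem_piAntidiag] at hg ⊢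
    obtain ⟨hsum, hsupp⟩ := hg
    refine ⟨⟨?_, fun j hj => ?_⟩, fun j hj => piecewise_eq_of_mem _ _ _ hj⟩
    · rw [hsplit, sum_const, smul_eq_mul, hsum]
      omega
    · by_cases hjt : j ∈ t
      · exact hts hjt
      · simp_all
  · intro f hf
    simp only [coe_filter, Set.mem_ofPred_eq] at hf
    ext j
    by_cases hj : j ∈ t <;> simp [hj, hf.2]
  · intro g hg
    simp only [mem_coe, mem_piAntidiag] at hg
    ext j
    by_cases hj : j ∈ t
    · have hgj : g j = 0 := by_contra fun h => (mem_sdiff.1 (hg.2 j h)).2 hj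
      simp [hj, hgj]
    · simp [hj]

theorem sum_descFactorial_card_filter_piAntidiag (s : Finset ι) {n r k : ℕ} (hk : k * r ≤ n) :
    ∑ f ∈ piAntidiag s n, (#{j ∈ s | f j = r}).descFactorial k =
      (#s).descFactorial k * (#s - k + (n - k * r) - 1).choose (n - k * r) := by
  have hfiber : ∀ t ∈ powersetCard k s, #{f ∈ piAntidiag s n | ∀ j ∈ t, f j = r} =
      (#s - k + (n - k * r) - 1).choose (n - k * r) := by
    intro t ht
    obtain ⟨hts, htk⟩ := mem_powersetCard.1 ht
    rw [card_filter_piAntidiag_eqOn hts (htk ▸ hk), card_piAntidiag_nat, card_sdiff_of_subset hts,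
      htk]
  simp_rw [Nat.descFactorial_eq_factorial_mul_choose]
  rw [← mul_sum, sum_choose_card_filter, sum_congr rfl hfiber, sum_const, card_powersetCard,
    smul_eq_mul, ← mul_assoc]

end Finset

theorem Nat.choose_sub_mul_descFactorial_add {n k p q : ℕ} (hp : p ≤ n) (hq : q ≤ k) :
    (n - p + (k - q)).choose (n - p) * (n + k).descFactorial (p + q) =
      (n + k).choose n * n.descFactorial p * k.descFactorial q := by
  apply Nat.eq_of_mul_eq_mul_right (Nat.mul_pos (n - p).factorial_pos (k - q).factorial_pos)
  calc _ = (n - p + (k - q)).choose (k - q) * (n - p).factorial * (k - q).factorial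
          * (n + k).descFactorial (p + q) := by rw [Nat.choose_symm_add]; ring
    _ = (n + k).factorial := by
      rw [Nat.add_choose_mul_factorial_mul_factorial,
        show n - p + (k - q) = n + k - (p + q) by omega, Nat.factorial_mul_descFactorial (by omega)]
    _ = (n + k).choose k * n.factorial * k.factorial :=
      (Nat.add_choose_mul_factorial_mul_factorial _ _).symm
    _ = _ := by
      rw [Nat.choose_symm_add, ← Nat.factorial_mul_descFactorial hp,
        ← Nat.factorial_mul_descFactorial hq]
      ring

theorem indistinguishable_balls_factorial_moment (n N r i : ℕ) (hN : 0 < N)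
    (hi : i * (r + 1) ≤ n + N - 1) :
    (∑ f ∈ Finset.Nat.antidiagonalTuple N n,
        (((Finset.univ.filter fun j : Fin N => f j = r).card.descFactorial i : ℚ))) /
        ((n + N - 1).choose n : ℚ) =
      ((N.descFactorial i : ℚ) * ((N - 1).descFactorial i) * (n.descFactorial (i * r))) /
        ((n + N - 1).descFactorial (i * (r + 1))) := by
  have hir : i * (r + 1) = i * r + i := by ring
  rw [← piAntidiag_univ_fin_eq_antidiagonalTuple, ← Nat.cast_sum]
  rcases lt_or_ge n (i * r) with hn | hn
  · rw [sum_eq_zero fun f hf => Nat.descFactorial_eq_zero_iff_lt.2 <|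
        Nat.lt_of_mul_lt_mul_right <| (card_filter_mul_le_of_mem_piAntidiag hf r).trans_lt hn,
      Nat.descFactorial_eq_zero_iff_lt.2 hn]
    simp
  rw [sum_descFactorial_card_filter_piAntidiag _ hn, card_univ, Fintype.card_fin,
    div_eq_div_iff (by exact_mod_cast (Nat.choose_pos (by omega)).ne')
      (by exact_mod_cast (Nat.descFactorial_pos.2 hi).ne')]
  rcases lt_or_ge i N with hiN | hiN
  · have key := Nat.choose_sub_mul_descFactorial_add hn (Nat.le_sub_one_of_lt hiN)
    rw [show n - i * r + (N - 1 - i) = N - i + (n - i * r) - 1 by omega, ← hir,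
      show n + (N - 1) = n + N - 1 by omega] at key
    norm_cast
    rw [mul_assoc, key]
    ring
  · -- `hi` forces `i * r < n`, so the `N - i = 0` remaining boxes would have to hold balls
    rw [Nat.choose_eq_zero_of_lt (by omega),
      Nat.descFactorial_eq_zero_iff_lt.2 (by omega : N - 1 < i)]
    simp
end

section
/- In the colored balls model, where from an urn of NM balls containing M balls of each of N colors a simple random sample of n ≤ NM balls is drawn and ξ_j is the number of balls of color j, the number S_n^(r) of colors with exactly r balls in the sample has i-th factorial moment E[(S_n^(r))_i] = (N)_i · C(M,r)^i · C((N−i)M, n−ri) / C(NM, n). -/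
/-!
`(S_n^(r))_i` counts the ordered `i`-tuples of distinct colors that each occur exactly `r` times,
i.e. it is `i!` times the number of `i`-sets `A` of such colors. Exchanging the two sums, a
sample in which every color of `A` occurs exactly `r` times is an independent choice of `r` of the
`M` balls of each color in `A`, together with `n - r i` balls among the `(N - i) M` balls of the
other colors; this gives `C(M, r)^i C((N - i) M, n - r i)` samples for each of the `C(N, i)` sets.
-/

open Finset

namespace Finset

theorem union_inter_eq_left_of_disjoint {α : Type*} [DecidableEq α] {s t U V : Finset α}
    (hst : Disjoint s t) (hU : U ⊆ s) (hV : V ⊆ t) : (U ∪ V) ∩ s = U := by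
  rw [union_inter_distrib_right, inter_eq_left.2 hU,
    disjoint_iff_inter_eq_empty.1 (hst.symm.mono_left hV), union_empty]

theorem card_filter_powerset_union {α : Type*} [DecidableEq α] {s t : Finset α}
    (hst : Disjoint s t) (P Q : Finset α → Prop) [DecidablePred P] [DecidablePred Q] :
    #{T ∈ (s ∪ t).powerset | P (T ∩ s) ∧ Q (T ∩ t)} =
      #{U ∈ s.powerset | P U} * #{V ∈ t.powerset | Q V} := by
  have hUs {U V} (hU : U ⊆ s) (hV : V ⊆ t) : (U ∪ V) ∩ s = U :=
    union_inter_eq_left_of_disjoint hst hU hV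
  have hVt {U V} (hU : U ⊆ s) (hV : V ⊆ t) : (U ∪ V) ∩ t = V := by
    rw [union_comm]; exact union_inter_eq_left_of_disjoint hst.symm hV hU
  rw [← card_product]
  apply card_nbij' (fun T => (T ∩ s, T ∩ t)) (fun p => p.1 ∪ p.2) <;>
    simp only [Set.MapsTo, Set.LeftInvOn, mem_coe, mem_product, mem_filter,
      mem_powerset, Prod.forall, and_imp]
  · exact fun T _ hP hQ => ⟨⟨inter_subset_right, hP⟩, inter_subset_right, hQ⟩
  · exact fun U V hU hPU hV hQV =>
      ⟨union_subset_union hU hV, by rwa [hUs hU hV], by rwa [hVt hU hV]⟩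
  · exact fun T hT _ _ => by rw [← inter_union_distrib_left, inter_eq_left.2 hT]
  · exact fun U V hU _ hV _ => by rw [hUs hU hV, hVt hU hV]

theorem descFactorial_card_filter {ι : Type*} (s : Finset ι) (p : ι → Prop)
    [DecidablePred p] (i : ℕ) :
    (#{j ∈ s | p j}).descFactorial i =
      i.factorial * #{A ∈ s.powersetCard i | ∀ j ∈ A, p j} := by
  rw [Nat.descFactorial_eq_factorial_mul_choose, ← card_powersetCard]
  congr 2
  ext A
  simp only [mem_powersetCard, mem_filter, subset_iff]
  grind

end Finset

section ColoredBalls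

variable {ι β : Type*} [DecidableEq ι]

/-- The number `ξ_j` of balls of color `j` in the sample `T`. -/
def colorCount (T : Finset (ι × β)) (j : ι) : ℕ := #{x ∈ T | x.1 = j}

theorem sum_colorCount_eq_card {A : Finset ι} {t : Finset β} {U : Finset (ι × β)}
    (hU : U ⊆ A ×ˢ t) : ∑ j ∈ A, colorCount U j = #U :=
  (card_eq_sum_card_fiberwise fun _ hx => (mem_product.1 (hU hx)).1).symm

variable [DecidableEq β] [Fintype β]

theorem colorCount_inter_product_univ {j : ι} {A : Finset ι} (hj : j ∈ A)
    (T : Finset (ι × β)) :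
    colorCount (T ∩ A ×ˢ univ) j = colorCount T j := by
  unfold colorCount
  rw [← filter_inter,
    inter_eq_left.2 fun _ hx => mem_product.2 ⟨(mem_filter.1 hx).2 ▸ hj, mem_univ _⟩]

theorem card_filter_powerset_colorCount_eq (r : ℕ) (A : Finset ι) :
    #{U ∈ (A ×ˢ (univ : Finset β)).powerset | ∀ j ∈ A, colorCount U j = r} =
      (Fintype.card β).choose r ^ #A := by
  induction A using Finset.induction_on with
  | empty => simp
  | insert a A ha ih =>
    have hdisj : Disjoint ({a} ×ˢ (univ : Finset β)) (A ×ˢ univ) :=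
      disjoint_product.2 (Or.inl (disjoint_singleton_left.2 ha))
    have hsingle : #{U ∈ ({a} ×ˢ (univ : Finset β)).powerset | colorCount U a = r} =
        (Fintype.card β).choose r := by
      rw [show (Fintype.card β).choose r = #(powersetCard r ({a} ×ˢ (univ : Finset β))) by simp,
        powersetCard_eq_filter]
      refine congrArg card (filter_congr fun U hU => ?_)
      rw [← sum_colorCount_eq_card (mem_powerset.1 hU), sum_singleton]
    rw [card_insert_of_notMem ha, pow_succ', ← ih, ← hsingle,
      ← card_filter_powerset_union hdisj, insert_eq, union_product]
    congr 1
    refine filter_congr fun U _ => ?_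
    rw [colorCount_inter_product_univ (mem_singleton_self a), ← insert_eq, forall_mem_insert]
    exact and_congr_right' (forall₂_congr fun j hj => by rw [colorCount_inter_product_univ hj])

theorem card_powersetCard_colorCount_eq {r n : ℕ} {A B : Finset ι} (hAB : A ⊆ B)
    (hn : r * #A ≤ n) :
    #{T ∈ powersetCard n (B ×ˢ (univ : Finset β)) | ∀ j ∈ A, colorCount T j = r} =
      (Fintype.card β).choose r ^ #A * ((#B - #A) * Fintype.card β).choose (n - r * #A) := by
  have hB : B ×ˢ (univ : Finset β) = A ×ˢ univ ∪ (B \ A) ×ˢ univ := by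
    rw [← union_product, union_sdiff_of_subset hAB]
  have hdisj : Disjoint (A ×ˢ (univ : Finset β)) ((B \ A) ×ˢ univ) :=
    disjoint_product.2 (Or.inl disjoint_sdiff)
  rw [← card_filter_powerset_colorCount_eq,
    show ((#B - #A) * Fintype.card β).choose (n - r * #A) =
      #{V ∈ ((B \ A) ×ˢ (univ : Finset β)).powerset | #V = n - r * #A} by
      rw [← powersetCard_eq_filter, card_powersetCard, card_product, card_sdiff_of_subset hAB,
        card_univ],
    ← card_filter_powerset_union hdisj, ← hB, powersetCard_eq_filter, filter_filter]
  refine congrArg card (filter_congr fun T hT => ?_)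
  have hcount :
      (∀ j ∈ A, colorCount (T ∩ A ×ˢ univ) j = r) ↔ ∀ j ∈ A, colorCount T j = r :=
    forall₂_congr fun j hj => by rw [colorCount_inter_product_univ hj]
  have hsplit : #T = #(T ∩ A ×ˢ univ) + #(T ∩ (B \ A) ×ˢ univ) := by
    rw [← card_union_of_disjoint (hdisj.mono inter_subset_right inter_subset_right),
      ← inter_union_distrib_left, ← hB, inter_eq_left.2 (mem_powerset.1 hT)]
  have hfilled (h : ∀ j ∈ A, colorCount T j = r) : #(T ∩ A ×ˢ univ) = r * #A := by
    rw [← sum_colorCount_eq_card inter_subset_right, sum_const_nat (hcount.2 h), mul_comm]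
  rw [hcount]
  constructor
  · rintro ⟨hT, h⟩
    exact ⟨h, by rw [hfilled h] at hsplit; omega⟩
  · rintro ⟨h, hT⟩
    exact ⟨by rw [hfilled h] at hsplit; omega, h⟩

theorem sum_descFactorial_card_colorCount_eq (C : Finset ι) {n r i : ℕ} (hri : r * i ≤ n) :
    ∑ T ∈ powersetCard n (C ×ˢ (univ : Finset β)),
        (#{j ∈ C | colorCount T j = r}).descFactorial i =
      (#C).descFactorial i * (Fintype.card β).choose r ^ i *
        ((#C - i) * Fintype.card β).choose (n - r * i) := by
  calc _ = i.factorial * ∑ A ∈ powersetCard i C,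
        #{T ∈ powersetCard n (C ×ˢ (univ : Finset β)) | ∀ j ∈ A, colorCount T j = r} := by
        simp_rw [descFactorial_card_filter, ← mul_sum]
        exact congrArg _ (sum_card_bipartiteAbove_eq_sum_card_bipartiteBelow _)
    _ = i.factorial * ∑ _A ∈ powersetCard i C,
        (Fintype.card β).choose r ^ i * ((#C - i) * Fintype.card β).choose (n - r * i) := by
        refine congrArg _ (sum_congr rfl fun A hA => ?_)
        obtain ⟨hAC, hA⟩ := mem_powersetCard.1 hA
        rw [card_powersetCard_colorCount_eq hAC (hA ▸ hri), hA]
    _ = _ := by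
        rw [sum_const, card_powersetCard, smul_eq_mul, Nat.descFactorial_eq_factorial_mul_choose]
        ring

end ColoredBalls

theorem colored_balls_factorial_moment_general (N M n r i : ℕ) (hri : r * i ≤ n) :
    (∑ T ∈ Finset.powersetCard n (Finset.univ : Finset (Fin N × Fin M)),
        (((Finset.univ.filter fun j : Fin N =>
            (T.filter fun x => x.1 = j).card = r).card.descFactorial i : ℚ))) /
        ((N * M).choose n : ℚ) =
      (N.descFactorial i : ℚ) * ((M.choose r : ℚ)) ^ i * (((N - i) * M).choose (n - r * i)) /
        ((N * M).choose n) := by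
  have h := sum_descFactorial_card_colorCount_eq (β := Fin M) (univ : Finset (Fin N)) hri
  rw [univ_product_univ, card_univ, Fintype.card_fin, Fintype.card_fin] at h
  rw [← Nat.cast_sum]
  exact_mod_cast congrArg (fun k : ℕ => (k : ℚ) / (N * M).choose n) h

theorem colored_balls_factorial_moment (N M n r i : ℕ) (hM : 0 < M) (hn : n ≤ N * M)
    (hiN : i ≤ N) (hri : r * i ≤ n) :
    (∑ T ∈ Finset.powersetCard n (Finset.univ : Finset (Fin N × Fin M)),
        (((Finset.univ.filter fun j : Fin N =>
            (T.filter fun x => x.1 = j).card = r).card.descFactorial i : ℚ))) /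
        ((N * M).choose n : ℚ) =
      (N.descFactorial i : ℚ) * ((M.choose r : ℚ)) ^ i * (((N - i) * M).choose (n - r * i)) /
        ((N * M).choose n) :=
  colored_balls_factorial_moment_general N M n r i hri
end

section
/- For all natural numbers m and s, s · Σ_{k=0}^m C(m,k) (k+1)^{k−1} (m−k+s)^{m−k−1} = (s+1)(m+1+s)^{m−1}. -/
/-!
Put `y = m + s` and write `s = (y - k) - (m - k)` in the `k`-th term. As
`(m - k) C(m,k) = m C(m-1,k)`, the sum becomes a difference of two instances of Abel's identity
`∑ C(n,k) (k+1)^(k-1) (y-k)^(n-k) = (y+1)^n`, and `(y+1)^m - m (y+1)^(m-1) = (s+1)(y+1)^(m-1)`.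
Abel's identity holds as an identity of polynomials in `y`: both sides satisfy
`P_{n+1}' = (n+1) P_n`, and both vanish at `y = -1`, where the left side is the `n`-th finite
difference of `k ↦ (1+k)^(n-1)`.
-/

open Finset Polynomial

section Abel

variable {R : Type*} [CommRing R]

theorem sum_range_neg_one_pow_mul_choose_mul_add_pow_eq_zero {n j : ℕ} (h : j < n) (y : R) :
    ∑ k ∈ range (n + 1), (-1) ^ (n - k) * (n.choose k : R) * (y + k) ^ j = 0 := by
  have := congrFun (fwdDiff_iter_pow_eq_zero_of_lt (R := R) h) y
  rw [fwdDiff_iter_eq_sum_shift] at this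
  simpa [zsmul_eq_mul] using this

variable (R) in
noncomputable def abelPoly (n : ℕ) : R[X] :=
  ∑ k ∈ range (n + 1), C ((n.choose k : R) * (k + 1) ^ (k - 1)) * (X - C (k : R)) ^ (n - k)

theorem eval_abelPoly (n : ℕ) (y : R) :
    (abelPoly R n).eval y =
      ∑ k ∈ range (n + 1), (n.choose k : R) * (k + 1) ^ (k - 1) * (y - k) ^ (n - k) := by
  simp [abelPoly, eval_finsetSum]

theorem eval_neg_one_abelPoly {n : ℕ} (hn : n ≠ 0) : (abelPoly R n).eval (-1) = 0 := by
  rw [eval_abelPoly, ← sum_range_neg_one_pow_mul_choose_mul_add_pow_eq_zero (R := R)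
    (show n - 1 < n by omega) 1]
  refine sum_congr rfl fun k hk => ?_
  have hkn : k ≤ n := Nat.lt_succ_iff.mp (mem_range.mp hk)
  have hpow : ((k : R) + 1) ^ (k - 1) * (k + 1) ^ (n - k) = (1 + k) ^ (n - 1) := by
    rcases k with _ | k
    · simp
    · rw [← pow_add, add_comm (1 : R)]
      congr 1
      omega
  rw [show (-1 : R) - k = -1 * (k + 1) by ring, mul_pow, ← hpow]
  ring

theorem derivative_abelPoly (n : ℕ) :
    derivative (abelPoly R (n + 1)) = C ((n : R) + 1) * abelPoly R n := by
  rw [abelPoly, abelPoly, derivative_sum, mul_sum, sum_range_succ, Nat.sub_self, pow_zero,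
    mul_one, derivative_C, add_zero]
  refine sum_congr rfl fun k hk => ?_
  have hkn : k ≤ n := Nat.lt_succ_iff.mp (mem_range.mp hk)
  have hchoose : ((n + 1).choose k : R) * ((n + 1 - k : ℕ) : R) = ((n : R) + 1) * n.choose k := by
    rw [← Nat.cast_mul, ← Nat.choose_mul_succ_eq, Nat.cast_mul, Nat.cast_succ, mul_comm]
  rw [derivative_C_mul, derivative_pow, derivative_X_sub_C, mul_one,
    show n + 1 - k - 1 = n - k by omega, ← mul_assoc, ← C_mul, ← mul_assoc, ← C_mul]
  congr 2
  linear_combination ((k : R) + 1) ^ (k - 1) * hchoose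

theorem abelPoly_eq [IsAddTorsionFree R] (n : ℕ) : abelPoly R n = (X + 1) ^ n := by
  induction n with
  | zero => simp [abelPoly]
  | succ n ih =>
    set D := abelPoly R (n + 1) - (X + 1) ^ (n + 1)
    have hD : derivative D = 0 := by
      simp [D, derivative_abelPoly, ih, derivative_pow, mul_comm]
    have hD1 : D.eval (-1) = 0 := by
      simp [D, eval_neg_one_abelPoly]
    rw [eq_C_of_derivative_eq_zero hD, eval_C] at hD1
    exact sub_eq_zero.mp ((eq_C_of_derivative_eq_zero hD).trans (by rw [hD1, map_zero]))

theorem sum_range_choose_mul_add_one_pow_mul_sub_pow [IsAddTorsionFree R] (n : ℕ) (y : R) :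
    ∑ k ∈ range (n + 1), (n.choose k : R) * (k + 1) ^ (k - 1) * (y - k) ^ (n - k) =
      (y + 1) ^ n := by
  simpa [eval_abelPoly] using congrArg (eval y) (abelPoly_eq (R := R) n)

theorem sub_mul_sum_range_choose_succ_mul_add_one_pow_mul_sub_pow [IsAddTorsionFree R] (n : ℕ)
    (y : R) :
    (y - (n + 1)) * ∑ k ∈ range (n + 1),
        ((n + 1).choose k : R) * (k + 1) ^ (k - 1) * (y - k) ^ (n - k) =
      (y - n) * (y + 1) ^ n - (n + 2) ^ n := by
  have hAbel := sum_range_choose_mul_add_one_pow_mul_sub_pow (n + 1) y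
  rw [sum_range_succ, Nat.choose_self, Nat.sub_self, pow_zero] at hAbel
  have hterm : ∀ k ∈ range (n + 1),
      (y - (n + 1)) * ((n + 1).choose k * (k + 1) ^ (k - 1) * (y - k) ^ (n - k)) =
        (n + 1).choose k * (k + 1) ^ (k - 1) * (y - k) ^ (n + 1 - k) -
          (n + 1) * (n.choose k * (k + 1) ^ (k - 1) * (y - k) ^ (n - k)) := by
    intro k hk
    have hkn : k ≤ n := Nat.lt_succ_iff.mp (mem_range.mp hk)
    have hchoose : ((n + 1).choose k : R) * (n + 1 - k) = (n + 1) * n.choose k := by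
      rw [← Nat.cast_succ, ← Nat.cast_sub (by omega), ← Nat.cast_mul, ← Nat.choose_mul_succ_eq,
        Nat.cast_mul, mul_comm]
    rw [show n + 1 - k = n - k + 1 by omega, pow_succ]
    linear_combination -((k : R) + 1) ^ (k - 1) * (y - k) ^ (n - k) * hchoose
  rw [mul_sum, sum_congr rfl hterm, sum_sub_distrib, ← mul_sum,
    sum_range_choose_mul_add_one_pow_mul_sub_pow]
  push_cast at hAbel
  linear_combination hAbel

end Abel

theorem natCast_add_one_zpow_natCast_sub_one {K : Type*} [DivisionRing K] (k : ℕ) :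
    ((k : K) + 1) ^ ((k : ℤ) - 1) = ((k : K) + 1) ^ (k - 1) := by
  rcases k with _ | k <;> simp

theorem abel_type_identity (m s : ℕ) (hs : 1 ≤ s) :
    (s : ℚ) * ∑ k ∈ Finset.range (m + 1),
        (m.choose k : ℚ) * ((k : ℚ) + 1) ^ ((k : ℤ) - 1) *
          ((m : ℚ) - k + s) ^ ((m : ℤ) - k - 1) =
      ((s : ℚ) + 1) * ((m : ℚ) + 1 + s) ^ ((m : ℤ) - 1) := by
  have hs0 : (s : ℚ) ≠ 0 := Nat.cast_ne_zero.mpr (by omega)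
  rcases m with _ | n
  · have hs1 : (s : ℚ) + 1 ≠ 0 := Nat.cast_add_one_ne_zero s
    simp [mul_inv_cancel₀ hs0, add_comm 1 (s : ℚ), mul_inv_cancel₀ hs1]
  have hbody : ∀ k ∈ range (n + 1),
      ((n + 1).choose k : ℚ) * ((k : ℚ) + 1) ^ ((k : ℤ) - 1) *
          (((n + 1 : ℕ) : ℚ) - k + s) ^ (((n + 1 : ℕ) : ℤ) - k - 1) =
        ((n + 1).choose k : ℚ) * (k + 1) ^ (k - 1) * (((n : ℚ) + 1 + s) - k) ^ (n - k) := by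
    intro k hk
    have hkn : k ≤ n := Nat.lt_succ_iff.mp (mem_range.mp hk)
    rw [natCast_add_one_zpow_natCast_sub_one,
      show ((n + 1 : ℕ) : ℤ) - k - 1 = ((n - k : ℕ) : ℤ) by omega, zpow_natCast]
    push_cast
    ring
  have key := sub_mul_sum_range_choose_succ_mul_add_one_pow_mul_sub_pow n ((n : ℚ) + 1 + s)
  rw [show (n : ℚ) + 1 + s - (n + 1) = s by ring] at key
  rw [sum_range_succ, sum_congr rfl hbody, mul_add]
  push_cast
  simp only [Nat.choose_self, Nat.cast_one, one_mul, add_sub_cancel_right, sub_self, zero_add,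
    zero_sub, zpow_neg_one, zpow_natCast, key]
  field_simp
  ring
end

section
/- For the exchangeable negative multinomial model P(ξ_1=k_1,...,ξ_N=k_N) = ((n+Σk_j)!/(n! ∏ k_j!)) p^{Σ k_j} (1−Np)^{n+1} with 0 < Np < 1, the i-th factorial moment of S_n^(r) = Σ_{j=1}^N 1{ξ_j = r} equals c_{i,n} = (N)_i · (n+ri)!/(n!(r!)^i) · (Nβ)^{n+1}/(Nβ+i)^{n+1+ri}, where β = (Np)^{-1} − 1. -/
open Finset MeasureTheory

/-!
Write `w_c(x; k) = (c + |k|)! / (c! ∏ k_j!) · x^|k|` for `k : α → ℕ`, so that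
`μ {k} = w_n(p; k) (1 - Np)^(n+1)`. Splitting off one coordinate,
`w_c(x; (t, g)) = C(c + t, t) x^t · w_(c+t)(x; g)`, so induction on `α` and the negative binomial
series give `∑_k w_c(x; k) = (1 - |α| x)^(-(c+1))`.

The falling factorial `(S_n^(r))_i` of the number of coordinates equal to `r` is `i!` times the
number of `i`-sets `A` of coordinates on which `ξ ≡ r`. Fixing `ξ = r` on `A` and summing out the other
`N - i` coordinates by the identity above gives that event the probability
`(n+ri)!/(n! r!^i) · p^(ri) (1-Np)^(n+1) / (1-(N-i)p)^(n+ri+1)`, and `Nβ = (1 - Np)/p` turns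
`C(N, i) i!` times this into `c_{i,n}`.
-/

section NegMultinomialWeight

variable {α β : Type*} [Fintype α] [Fintype β]

noncomputable def negMultinomialWeight (c : ℕ) (x : ℝ) (k : α → ℕ) : ℝ :=
  ((c + ∑ j, k j).factorial : ℝ) / ((c.factorial : ℝ) * ∏ j, ((k j).factorial : ℝ)) *
    x ^ (∑ j, k j)

theorem negMultinomialWeight_comp_equiv (c : ℕ) (x : ℝ) (e : β ≃ α) (k : α → ℕ) :
    negMultinomialWeight c x (k ∘ e) = negMultinomialWeight c x k := by
  simp only [negMultinomialWeight, Function.comp_apply, e.sum_comp k,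
    e.prod_comp fun j => ((k j).factorial : ℝ)]

theorem negMultinomialWeight_sum_elim (c : ℕ) (x : ℝ) (k : α → ℕ) (g : β → ℕ) :
    negMultinomialWeight c x (Sum.elim k g) =
      negMultinomialWeight c x k * negMultinomialWeight (c + ∑ j, k j) x g := by
  have := Nat.factorial_ne_zero (c + ∑ j, k j)
  simp only [negMultinomialWeight, Fintype.sum_sum_type, Fintype.prod_sum_type,
    Sum.elim_inl, Sum.elim_inr, ← add_assoc, pow_add]
  field_simp

theorem negMultinomialWeight_piOptionEquivProd_symm (c : ℕ) (x : ℝ) (t : ℕ) (g : α → ℕ) :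
    negMultinomialWeight c x (Equiv.piOptionEquivProd.symm (t, g)) =
      ((t + c).choose c : ℝ) * x ^ t * negMultinomialWeight (c + t) x g := by
  have := Nat.factorial_ne_zero (c + t)
  rw [Nat.cast_choose ℝ (Nat.le_add_left c _), Nat.add_sub_cancel, add_comm t]
  simp only [negMultinomialWeight, Fintype.sum_option, Fintype.prod_option,
    Equiv.piOptionEquivProd_symm_apply, ← add_assoc, pow_add]
  field_simp

end NegMultinomialWeight

theorem tsum_ofReal_choose_mul_pow (c : ℕ) {x : ℝ} (hx : 0 ≤ x) (hx₁ : x < 1) :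
    ∑' t : ℕ, ENNReal.ofReal (((t + c).choose c : ℝ) * x ^ t) =
      ENNReal.ofReal ((1 - x) ^ (c + 1))⁻¹ := by
  have hs := hasSum_choose_mul_geometric_of_norm_lt_one (𝕜 := ℝ) c
    (by rwa [Real.norm_eq_abs, abs_of_nonneg hx])
  rw [← ENNReal.ofReal_tsum_of_nonneg (fun t => by positivity) hs.summable, hs.tsum_eq, one_div]

theorem tsum_ofReal_negMultinomialWeight_option {α : Type*} [Fintype α] {x M : ℝ} (hx : 0 ≤ x)
    (hMx : (M + 1) * x < 1)
    (h : ∀ c, ∑' k : α → ℕ, ENNReal.ofReal (negMultinomialWeight c x k) =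
      ENNReal.ofReal ((1 - M * x) ^ (c + 1))⁻¹) (c : ℕ) :
    ∑' k : Option α → ℕ, ENNReal.ofReal (negMultinomialWeight c x k) =
      ENNReal.ofReal ((1 - (M + 1) * x) ^ (c + 1))⁻¹ := by
  have hMx₀ : 0 < 1 - M * x := by nlinarith
  set y := x / (1 - M * x)
  have hy : 0 ≤ y := by positivity
  have hy₁ : y < 1 := by rw [div_lt_one hMx₀]; linarith
  rw [← Equiv.piOptionEquivProd.symm.tsum_eq, ENNReal.tsum_prod']
  calc ∑' (t : ℕ) (g : α → ℕ),
        ENNReal.ofReal (negMultinomialWeight c x (Equiv.piOptionEquivProd.symm (t, g)))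
      = ∑' t : ℕ, ENNReal.ofReal ((1 - M * x) ^ (c + 1))⁻¹ *
          ENNReal.ofReal (((t + c).choose c : ℝ) * y ^ t) := by
        refine tsum_congr fun t => ?_
        simp_rw [negMultinomialWeight_piOptionEquivProd_symm,
          ENNReal.ofReal_mul (by positivity : (0 : ℝ) ≤ ((t + c).choose c : ℝ) * x ^ t)]
        rw [ENNReal.tsum_mul_left, h (c + t), ← ENNReal.ofReal_mul (by positivity),
          ← ENNReal.ofReal_mul (by positivity)]
        congr 1
        rw [div_pow, show c + t + 1 = c + 1 + t by ring, pow_add]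
        field_simp
    _ = ENNReal.ofReal (((1 - M * x) ^ (c + 1))⁻¹ * ((1 - y) ^ (c + 1))⁻¹) := by
        rw [ENNReal.tsum_mul_left, tsum_ofReal_choose_mul_pow c hy hy₁,
          ENNReal.ofReal_mul (by positivity)]
    _ = ENNReal.ofReal ((1 - (M + 1) * x) ^ (c + 1))⁻¹ := by
        rw [← mul_inv, ← mul_pow]
        congr 3
        simp only [y]
        field_simp
        ring

theorem tsum_ofReal_negMultinomialWeight (α : Type*) [Fintype α] (c : ℕ) {x : ℝ} (hx : 0 ≤ x)
    (hαx : (Fintype.card α : ℝ) * x < 1) :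
    ∑' k : α → ℕ, ENNReal.ofReal (negMultinomialWeight c x k) =
      ENNReal.ofReal ((1 - Fintype.card α * x) ^ (c + 1))⁻¹ := by
  revert c hαx
  refine Finite.induction_empty_option (P := fun α => ∀ [Fintype α] (c : ℕ),
    (Fintype.card α : ℝ) * x < 1 → ∑' k : α → ℕ, ENNReal.ofReal (negMultinomialWeight c x k) =
      ENNReal.ofReal ((1 - Fintype.card α * x) ^ (c + 1))⁻¹) ?_ ?_ ?_ α
  · intro α β e ih _ c hβx
    let := Fintype.ofEquiv β e.symm
    have hcard : Fintype.card α = Fintype.card β := Fintype.card_congr e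
    rw [← (e.arrowCongr (Equiv.refl ℕ)).tsum_eq, ← hcard, ← ih c (by rwa [hcard])]
    exact tsum_congr fun k => congrArg _ (negMultinomialWeight_comp_equiv c x e.symm k)
  · intro _ c _
    simp [negMultinomialWeight, Nat.factorial_ne_zero]
  · intro α _ ih inst c hαx
    obtain rfl : inst = instFintypeOption := Subsingleton.elim _ _
    rw [Fintype.card_option, Nat.cast_succ] at hαx ⊢
    exact tsum_ofReal_negMultinomialWeight_option hx hαx (fun c => ih c (by nlinarith)) c

theorem tsum_indicator_ofReal_negMultinomialWeight {α : Type*} [Fintype α] (c r : ℕ) {x : ℝ}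
    (hx : 0 ≤ x) (hαx : (Fintype.card α : ℝ) * x < 1) (A : Finset α) :
    ∑' k : α → ℕ, {k : α → ℕ | ∀ j ∈ A, k j = r}.indicator
        (fun k => ENNReal.ofReal (negMultinomialWeight c x k)) k =
      ENNReal.ofReal ((c + r * #A).factorial / (c.factorial * r.factorial ^ #A) * x ^ (r * #A) /
        (1 - (Fintype.card α - #A) * x) ^ (c + r * #A + 1)) := by
  classical
  set S := {k : α → ℕ | ∀ j ∈ A, k j = r}
  let e := Equiv.sumCompl (· ∈ A)
  let extend (g : {j // j ∉ A} → ℕ) : α → ℕ := Sum.elim (fun _ => r) g ∘ e.symm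
  have extend_mem (g) : extend g ∈ S := fun j hj => by simp [extend, e, hj]
  have extend_injective : extend.Injective := fun g g' h => funext fun b => by
    simpa [extend, e, b.2] using congrFun h b
  have support_subset : (S.indicator fun k => ENNReal.ofReal (negMultinomialWeight c x k)).support
      ⊆ Set.range extend := by
    intro k hk
    refine ⟨fun b => k b, funext fun j => ?_⟩
    by_cases hj : j ∈ A
    · simp [extend, e, hj, Set.mem_of_indicator_ne_zero hk j hj]
    · simp [extend, e, hj]
  have hcard : (Fintype.card {j // j ∉ A} : ℝ) = Fintype.card α - #A := by
    rw [Fintype.card_subtype_compl, Fintype.card_coe, Nat.cast_sub A.card_le_univ]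
  have hweight (g) : negMultinomialWeight c x (extend g) =
      (c + r * #A).factorial / (c.factorial * r.factorial ^ #A) * x ^ (r * #A) *
        negMultinomialWeight (c + r * #A) x g := by
    rw [negMultinomialWeight_comp_equiv, negMultinomialWeight_sum_elim]
    have hsum : ∑ _j : A, r = r * #A := by simp [mul_comm]
    rw [hsum]
    congr 1
    simp only [negMultinomialWeight, hsum, Finset.prod_const, Finset.card_univ, Fintype.card_coe]
  rw [← extend_injective.tsum_eq support_subset]
  have hcoef :
      (0 : ℝ) ≤ (c + r * #A).factorial / (c.factorial * r.factorial ^ #A) * x ^ (r * #A) := by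
    positivity
  simp_rw [Set.indicator_of_mem (extend_mem _), hweight, ENNReal.ofReal_mul hcoef,
    ENNReal.tsum_mul_left]
  rw [tsum_ofReal_negMultinomialWeight _ _ hx (by rw [hcard]; nlinarith), hcard,
    ← ENNReal.ofReal_mul hcoef, ← div_eq_mul_inv]

theorem measureReal_setOf_forall_mem_eq {α : Type*} [Fintype α] {μ : Measure (α → ℕ)} {c : ℕ}
    {x q : ℝ} (hx : 0 ≤ x) (hq : 0 ≤ q) (hαx : (Fintype.card α : ℝ) * x < 1)
    (hμ : ∀ k, μ {k} = ENNReal.ofReal (negMultinomialWeight c x k * q)) (r : ℕ) (A : Finset α) :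
    μ.real {k | ∀ j ∈ A, k j = r} =
      (c + r * #A).factorial / (c.factorial * r.factorial ^ #A) * x ^ (r * #A) * q /
        (1 - (Fintype.card α - #A) * x) ^ (c + r * #A + 1) := by
  have : 0 < 1 - ((Fintype.card α : ℝ) - #A) * x := by
    nlinarith [show (0 : ℝ) ≤ #A * x by positivity]
  rw [Measure.real, ← Measure.tsum_indicator_apply_singleton μ _ MeasurableSet.of_discrete]
  simp_rw [hμ, ENNReal.ofReal_mul' hq, Set.indicator_mul_left]
  rw [ENNReal.tsum_mul_right, tsum_indicator_ofReal_negMultinomialWeight c r hx hαx,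
    ← ENNReal.ofReal_mul' hq, ENNReal.toReal_ofReal (by positivity), div_mul_eq_mul_div]

theorem Finset.descFactorial_card_filter_s18 {α : Type*} [Fintype α] (P : α → Prop) [DecidablePred P]
    (i : ℕ) :
    (#{j | P j}).descFactorial i = i.factorial * #{A ∈ powersetCard i univ | ∀ j ∈ A, P j} := by
  rw [Nat.descFactorial_eq_factorial_mul_choose, ← card_powersetCard]
  congr 2
  ext A
  simp [mem_powersetCard, subset_iff, and_comm]

theorem integral_descFactorial_card_eq_sum {α : Type*} [Fintype α] (μ : Measure (α → ℕ))
    [IsFiniteMeasure μ] (r i : ℕ) :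
    ∫ k, ((#{j | k j = r}).descFactorial i : ℝ) ∂μ =
      i.factorial * ∑ A ∈ powersetCard i univ, μ.real {k | ∀ j ∈ A, k j = r} := by
  classical
  let S (A : Finset α) : Set (α → ℕ) := {k | ∀ j ∈ A, k j = r}
  have hcount (k : α → ℕ) : ((#{j | k j = r}).descFactorial i : ℝ) =
      i.factorial * ∑ A ∈ powersetCard i univ, (S A).indicator (1 : (α → ℕ) → ℝ) k := by
    rw [Finset.descFactorial_card_filter_s18, card_filter]
    push_cast
    simp [Set.indicator_apply, S]
  simp_rw [hcount]
  rw [integral_const_mul, integral_finsetSum]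
  · simp_rw [integral_indicator_one MeasurableSet.of_discrete]
    rfl
  · exact fun A _ => (integrable_const 1).indicator MeasurableSet.of_discrete

theorem negative_multinomial_factorial_moment (N n r i : ℕ) (hN : 0 < N)
    (p : ℝ) (hp : 0 < p) (hNp : (N : ℝ) * p < 1)
    (μ : Measure (Fin N → ℕ)) [IsProbabilityMeasure μ]
    (hμ : ∀ k : Fin N → ℕ, μ {k} =
      ENNReal.ofReal (((n + ∑ j, k j).factorial : ℝ) /
          ((n.factorial : ℝ) * ∏ j, ((k j).factorial : ℝ)) *
        p ^ (∑ j, k j) * (1 - N * p) ^ (n + 1))) :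
    ∫ k, ((Finset.univ.filter fun j : Fin N => k j = r).card.descFactorial i : ℝ) ∂μ =
      (N.descFactorial i : ℝ) * ((n + r * i).factorial / ((n.factorial : ℝ) *
          (r.factorial : ℝ) ^ i)) *
        ((N : ℝ) * (((N : ℝ) * p)⁻¹ - 1)) ^ (n + 1) /
          ((N : ℝ) * (((N : ℝ) * p)⁻¹ - 1) + i) ^ (n + 1 + r * i) := by
  have h1Np : 0 < 1 - (N : ℝ) * p := by linarith
  have hevent (A) (hA : A ∈ powersetCard i univ) : μ.real {k | ∀ j ∈ A, k j = r} =
      (n + r * i).factorial / (n.factorial * r.factorial ^ i) * p ^ (r * i) *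
        (1 - N * p) ^ (n + 1) / (1 - (N - i) * p) ^ (n + r * i + 1) := by
    have := measureReal_setOf_forall_mem_eq hp.le (by positivity) (by simpa using hNp) hμ r A
    simpa [(mem_powersetCard.1 hA).2] using this
  have hβ : (N : ℝ) * ((N * p)⁻¹ - 1) = (1 - N * p) / p := by field_simp
  have hβi : (1 - N * p) / p + i = (1 - (N - i) * p) / p := by field_simp; ring
  have : 0 < 1 - (N - i : ℝ) * p := by nlinarith [show (0 : ℝ) ≤ i * p by positivity]
  rw [integral_descFactorial_card_eq_sum, sum_congr rfl hevent, sum_const, card_powersetCard,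
    card_univ, Fintype.card_fin, nsmul_eq_mul, hβ, hβi, div_pow, div_pow,
    Nat.descFactorial_eq_factorial_mul_choose]
  push_cast
  field_simp
  ring
end
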